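/- arXiv:1912.12625 — 2 statements merged into one kernel-verified Lean document; each statement's English description precedes it below -/
import Mathlib

section
/- Let λ > 0, c > 0, t > 0, and define p(u,t) = (e^{−λt}/c) [ −λ F(u,t) + (∂F/∂t)(u,t) + (2/λ)(∂²F/∂t²)(u,t) ], where F(u,t) = ∑_{k=0}^∞ (λ/(2c))^{2k} (c²t² − u²)^k / (k!)². Then ∫₀^{ct} p(u,t) du = 1 − e^{−λt} − λ t e^{−λt}. -/
/-- `F(u,t) = ∑_{k=0}^∞ (λ/(2c))^{2k} (c²t² − u²)^k / (k!)²`,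
which equals `I₀((λ/c)√(c²t² − u²))` for `|u| ≤ ct`. -/
noncomputable def F (lam c u t : ℝ) : ℝ :=
  ∑' k : ℕ, (lam / (2 * c)) ^ (2 * k) * (c ^ 2 * t ^ 2 - u ^ 2) ^ k /
    ((Nat.factorial k : ℝ)) ^ 2

/-- The density of the absolutely continuous component of the planar cyclic motion:
`p(u,t) = (e^{−λt}/c)[−λF + ∂F/∂t + (2/λ)∂²F/∂t²]`. -/
noncomputable def planarDensity (lam c u t : ℝ) : ℝ :=
  Real.exp (-(lam * t)) / c *
    (-(lam * F lam c u t) + deriv (fun s => F lam c u s) t +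
      2 / lam * iteratedDeriv 2 (fun s => F lam c u s) t)

/-!
Write `F(u, t) = G₀(c²t² − u²)` with `Gₘ(y) = ∑ₖ q^(k+m) y^k / (k! (k+m)!)` and `q = (λ/2c)²`.
Then `Gₘ' = Gₘ₊₁`, so `p` is a combination of `G₀`, `G₁`, `G₂`. Integrating termwise with
`∫₀^a (a² − u²)^k du = 4^k k!² a^(2k+1) / (2k+1)!`, the integrals `∫₀^{ct} Gₘ` become tails of
the Taylor series of `sinh λt` and `cosh λt`, and the combination collapses to
`e^{−λt} (e^{λt} − 1 − λt)`.
-/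

open Real MeasureTheory
open scoped Nat

section ExpTypeSeries

variable {b : ℕ → ℝ} {C ρ : ℝ}

theorem summable_mul_pow_div_factorial (hb : ∀ n, |b n| ≤ C * ρ ^ n) (y : ℝ) :
    Summable fun n => b n * y ^ n / n ! := by
  refine .of_norm_bounded ((Real.summable_pow_div_factorial (ρ * |y|)).mul_left C) fun n => ?_
  rw [Real.norm_eq_abs, abs_div, abs_mul, abs_pow, Nat.abs_cast]
  calc |b n| * |y| ^ n / n ! ≤ C * ρ ^ n * |y| ^ n / n ! := by gcongr; exact hb n
    _ = C * ((ρ * |y|) ^ n / n !) := by ring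

theorem hasDerivAt_tsum_mul_pow_div_factorial (hb : ∀ n, |b n| ≤ C * ρ ^ n) (y : ℝ) :
    HasDerivAt (fun z => ∑' n, b n * z ^ n / n !) (∑' n, b (n + 1) * y ^ n / n !) y := by
  have hshift : (fun z => ∑' n, b n * z ^ n / n !) =
      fun z => b 0 + ∑' n, b (n + 1) * z ^ (n + 1) / (n + 1)! := by
    funext z
    rw [(summable_mul_pow_div_factorial hb z).tsum_eq_zero_add]
    simp
  have hterm (n : ℕ) (z : ℝ) : HasDerivAt (fun z => b (n + 1) * z ^ (n + 1) / (n + 1)!)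
      (b (n + 1) * z ^ n / n !) z := by
    refine (((hasDerivAt_pow (n + 1) z).const_mul (b (n + 1))).div_const _).congr_deriv ?_
    rw [Nat.factorial_succ]
    push_cast
    field_simp
  have hbound (R : ℝ) (n : ℕ) (z : ℝ) (hz : z ∈ Metric.ball 0 R) :
      ‖b (n + 1) * z ^ n / (n ! : ℝ)‖ ≤ C * ρ * ((ρ * R) ^ n / n !) := by
    rw [mem_ball_zero_iff, Real.norm_eq_abs] at hz
    rw [Real.norm_eq_abs, abs_div, abs_mul, abs_pow, Nat.abs_cast]
    calc |b (n + 1)| * |z| ^ n / n ! ≤ C * ρ ^ (n + 1) * R ^ n / n ! := by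
          gcongr
          · exact (abs_nonneg _).trans (hb (n + 1))
          · exact hb (n + 1)
      _ = C * ρ * ((ρ * R) ^ n / n !) := by ring
  rw [hshift]
  refine HasDerivAt.const_add _ <| hasDerivAt_tsum_of_isPreconnected
    ((Real.summable_pow_div_factorial (ρ * (|y| + 1))).mul_left (C * ρ)) Metric.isOpen_ball
    (convex_ball 0 _).isPreconnected (fun n z _ => hterm n z) (hbound _)
    (Metric.mem_ball_self (by positivity)) ?_ ?_ <;> simp

end ExpTypeSeries

/-- For `q, y > 0` this is `(q / y) ^ (m / 2) * I_m (2 * √(q * y))`. -/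
noncomputable def besselSeries (q : ℝ) (m : ℕ) (y : ℝ) : ℝ :=
  ∑' k : ℕ, q ^ (k + m) / (k + m)! * y ^ k / k !

theorem abs_pow_add_div_factorial_le (q : ℝ) (m k : ℕ) :
    |q ^ (k + m) / (k + m)!| ≤ |q| ^ m * |q| ^ k := by
  rw [abs_div, Nat.abs_cast, abs_pow, pow_add, mul_comm]
  exact div_le_self (by positivity) (mod_cast Nat.one_le_iff_ne_zero.2 (Nat.factorial_ne_zero _))

theorem summable_besselSeries (q : ℝ) (m : ℕ) (y : ℝ) :
    Summable fun k : ℕ => q ^ (k + m) / (k + m)! * y ^ k / k ! :=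
  summable_mul_pow_div_factorial (abs_pow_add_div_factorial_le q m) y

theorem hasDerivAt_besselSeries (q : ℝ) (m : ℕ) (y : ℝ) :
    HasDerivAt (besselSeries q m) (besselSeries q (m + 1) y) y := by
  have h := hasDerivAt_tsum_mul_pow_div_factorial (abs_pow_add_div_factorial_le q m) y
  simp only [add_right_comm _ 1 m, add_assoc] at h
  exact h

theorem continuous_besselSeries (q : ℝ) (m : ℕ) : Continuous (besselSeries q m) :=
  continuous_iff_continuousAt.2 fun y => (hasDerivAt_besselSeries q m y).continuousAt

theorem hasDerivAt_besselSeries_sq_sub (q : ℝ) (m : ℕ) (c u s : ℝ) :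
    HasDerivAt (fun s => besselSeries q m ((c * s) ^ 2 - u ^ 2))
      (besselSeries q (m + 1) ((c * s) ^ 2 - u ^ 2) * (2 * c ^ 2 * s)) s := by
  have hinner : HasDerivAt (fun s => (c * s) ^ 2 - u ^ 2) (2 * c ^ 2 * s) s := by
    simp_rw [mul_pow]
    exact (((hasDerivAt_pow 2 s).const_mul (c ^ 2)).sub_const (u ^ 2)).congr_deriv (by ring)
  exact (hasDerivAt_besselSeries q m _).comp s hinner

theorem F_eq_besselSeries (lam c u : ℝ) :
    F lam c u = fun s => besselSeries ((lam / (2 * c)) ^ 2) 0 ((c * s) ^ 2 - u ^ 2) := by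
  funext s
  refine tsum_congr fun k => ?_
  rw [add_zero, ← pow_mul, mul_pow]
  ring

theorem planarDensity_eq_besselSeries (lam c u t : ℝ) :
    let G := fun m => besselSeries ((lam / (2 * c)) ^ 2) m ((c * t) ^ 2 - u ^ 2)
    planarDensity lam c u t = exp (-(lam * t)) / c *
      (-lam * G 0 + (2 * c ^ 2 * t + 4 * c ^ 2 / lam) * G 1 + 8 * c ^ 4 * t ^ 2 / lam * G 2) := by
  intro G
  set q := (lam / (2 * c)) ^ 2
  have hderiv : deriv (F lam c u) = fun s =>
      besselSeries q 1 ((c * s) ^ 2 - u ^ 2) * (2 * c ^ 2 * s) := by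
    funext s
    rw [F_eq_besselSeries]
    exact (hasDerivAt_besselSeries_sq_sub q 0 c u s).deriv
  have hderiv2 : iteratedDeriv 2 (F lam c u) t =
      G 2 * (2 * c ^ 2 * t) * (2 * c ^ 2 * t) + G 1 * (2 * c ^ 2) := by
    rw [iteratedDeriv_succ, iteratedDeriv_one, hderiv]
    exact ((hasDerivAt_besselSeries_sq_sub q 1 c u t).mul
      ((hasDerivAt_id t).const_mul (2 * c ^ 2))).deriv.trans (by simp [G, q])
  rw [planarDensity, hderiv2, hderiv, F_eq_besselSeries]
  ring

/-- Integrate `d/du [u (a² − u²)^(k+1)]` over `[0, a]`. -/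
theorem integral_sq_sub_sq_pow_succ (a : ℝ) (k : ℕ) :
    (2 * k + 3) * ∫ u in (0 : ℝ)..a, (a ^ 2 - u ^ 2) ^ (k + 1) =
      2 * (k + 1) * a ^ 2 * ∫ u in (0 : ℝ)..a, (a ^ 2 - u ^ 2) ^ k := by
  have hderiv (u : ℝ) : HasDerivAt (fun u => u * (a ^ 2 - u ^ 2) ^ (k + 1))
      ((2 * k + 3) * (a ^ 2 - u ^ 2) ^ (k + 1) - 2 * (k + 1) * a ^ 2 * (a ^ 2 - u ^ 2) ^ k) u := by
    have hinner := ((hasDerivAt_pow 2 u).const_sub (a ^ 2)).fun_pow (k + 1)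
    refine ((hasDerivAt_id' u).mul hinner).congr_deriv ?_
    push_cast
    ring
  have hcont : ∀ n : ℕ, IntervalIntegrable (fun u : ℝ => (a ^ 2 - u ^ 2) ^ n) volume 0 a :=
    fun n => (by fun_prop : Continuous fun u : ℝ => (a ^ 2 - u ^ 2) ^ n).intervalIntegrable _ _
  have hftc := intervalIntegral.integral_eq_sub_of_hasDerivAt (fun u _ => hderiv u)
    (((hcont _).const_mul _).sub ((hcont _).const_mul _))
  rw [intervalIntegral.integral_sub ((hcont _).const_mul _) ((hcont _).const_mul _),
    intervalIntegral.integral_const_mul, intervalIntegral.integral_const_mul] at hftc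
  norm_num at hftc
  linarith

theorem integral_sq_sub_sq_pow (a : ℝ) (k : ℕ) :
    ∫ u in (0 : ℝ)..a, (a ^ 2 - u ^ 2) ^ k = 4 ^ k * k ! ^ 2 / (2 * k + 1)! * a ^ (2 * k + 1) := by
  induction k with
  | zero => simp
  | succ k ih =>
    have hrec := integral_sq_sub_sq_pow_succ a k
    rw [ih] at hrec
    have h3 : (2 * k + 3 : ℝ) ≠ 0 := by positivity
    rw [← mul_right_inj' h3, hrec, show 2 * (k + 1) + 1 = 2 * k + 1 + 1 + 1 by ring,
      Nat.factorial_succ (2 * k + 1 + 1), Nat.factorial_succ (2 * k + 1), Nat.factorial_succ k]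
    push_cast
    field_simp
    ring

theorem hasSum_integral_besselSeries (q : ℝ) (m : ℕ) (a : ℝ) :
    HasSum (fun k : ℕ => q ^ (k + m) / (k + m)! * (4 ^ k * k ! / (2 * k + 1)!) * a ^ (2 * k + 1))
      (∫ u in (0 : ℝ)..a, besselSeries q m (a ^ 2 - u ^ 2)) := by
  have hterm (k : ℕ) : ∫ u in (0 : ℝ)..a, q ^ (k + m) / (k + m)! * (a ^ 2 - u ^ 2) ^ k / k ! =
      q ^ (k + m) / (k + m)! * (4 ^ k * k ! / (2 * k + 1)!) * a ^ (2 * k + 1) := by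
    rw [intervalIntegral.integral_div, intervalIntegral.integral_const_mul, integral_sq_sub_sq_pow]
    field_simp
  rw [← funext hterm]
  refine intervalIntegral.hasSum_integral_of_dominated_convergence
    (fun k _ => |q ^ (k + m) / (k + m)!| * (a ^ 2) ^ k / k !)
    (fun k => (by fun_prop : Continuous fun u : ℝ =>
      q ^ (k + m) / (k + m)! * (a ^ 2 - u ^ 2) ^ k / k !).aestronglyMeasurable)
    (fun k => ae_of_all _ fun u hu => ?_)
    (ae_of_all _ fun _ _ => summable_mul_pow_div_factorial
      (fun k => (abs_abs _).trans_le (abs_pow_add_div_factorial_le q m k)) _)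
    intervalIntegrable_const
    (ae_of_all _ fun u _ => (summable_besselSeries q m _).hasSum)
  have hu2 : |a ^ 2 - u ^ 2| ≤ a ^ 2 := by
    rw [abs_le]
    rcases Set.mem_uIoc.1 hu with h | h <;> constructor <;> nlinarith
  rw [Real.norm_eq_abs, abs_div, abs_mul, abs_pow, Nat.abs_cast]
  gcongr

theorem two_mul_integral_besselSeries_zero (b a : ℝ) :
    2 * b * ∫ u in (0 : ℝ)..a, besselSeries (b ^ 2) 0 (a ^ 2 - u ^ 2) = sinh (2 * b * a) := by
  refine ((hasSum_integral_besselSeries _ 0 a).mul_left (2 * b)).unique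
    ((Real.hasSum_sinh (2 * b * a)).congr_fun fun k => ?_)
  rw [add_zero, show (4 : ℝ) ^ k = 2 ^ (2 * k) by rw [pow_mul]; norm_num]
  field_simp
  ring

theorem two_mul_integral_besselSeries_one (b a : ℝ) :
    2 * a * ∫ u in (0 : ℝ)..a, besselSeries (b ^ 2) 1 (a ^ 2 - u ^ 2) = cosh (2 * b * a) - 1 := by
  have hcosh := (hasSum_nat_add_iff' 1).mpr (Real.hasSum_cosh (2 * b * a))
  norm_num at hcosh
  refine ((hasSum_integral_besselSeries _ 1 a).mul_left (2 * a)).unique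
    (hcosh.congr_fun fun k => ?_)
  rw [show (4 : ℝ) ^ k = 2 ^ (2 * k) by rw [pow_mul]; norm_num,
    show 2 * (k + 1) = 2 * k + 1 + 1 by ring]
  simp only [Nat.factorial_succ]
  push_cast
  field_simp
  ring

/-- Termwise this is the partial fraction
`1 / ((2k+1)! (k+1) (k+2)) = 4 / (2k+3)! - 4 / (2k+4)!`. -/
theorem four_mul_pow_three_integral_besselSeries_two (b a : ℝ) :
    4 * a ^ 3 * ∫ u in (0 : ℝ)..a, besselSeries (b ^ 2) 2 (a ^ 2 - u ^ 2) =
      2 * b * a * (sinh (2 * b * a) - 2 * b * a) -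
        (cosh (2 * b * a) - (1 + (2 * b * a) ^ 2 / 2)) := by
  set x := 2 * b * a
  have hsinh := (hasSum_nat_add_iff' 1).mpr (Real.hasSum_sinh x)
  have hcosh := (hasSum_nat_add_iff' 2).mpr (Real.hasSum_cosh x)
  norm_num [Finset.sum_range_succ] at hsinh hcosh
  refine ((hasSum_integral_besselSeries _ 2 a).mul_left (4 * a ^ 3)).unique
    (((hsinh.mul_left x).sub hcosh).congr_fun fun k => ?_)
  rw [show (4 : ℝ) ^ k = 2 ^ (2 * k) by rw [pow_mul]; norm_num,
    show 2 * (k + 1) + 1 = 2 * k + 1 + 1 + 1 by ring,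
    show 2 * (k + 2) = 2 * k + 1 + 1 + 1 + 1 by ring, show k + 2 = k + 1 + 1 by ring]
  simp only [Nat.factorial_succ]
  push_cast
  field_simp
  ring

theorem integral_planarDensity_eq_besselSeries (lam c t : ℝ) :
    let I := fun m =>
      ∫ u in (0 : ℝ)..c * t, besselSeries ((lam / (2 * c)) ^ 2) m ((c * t) ^ 2 - u ^ 2)
    ∫ u in (0 : ℝ)..c * t, planarDensity lam c u t = exp (-(lam * t)) / c *
      (-lam * I 0 + (2 * c ^ 2 * t + 4 * c ^ 2 / lam) * I 1 + 8 * c ^ 4 * t ^ 2 / lam * I 2) := by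
  intro I
  have hint (m : ℕ) : IntervalIntegrable
      (fun u => besselSeries ((lam / (2 * c)) ^ 2) m ((c * t) ^ 2 - u ^ 2)) volume 0 (c * t) :=
    ((continuous_besselSeries _ m).comp (by fun_prop)).intervalIntegrable _ _
  simp only [planarDensity_eq_besselSeries]
  rw [intervalIntegral.integral_const_mul,
    intervalIntegral.integral_add (((hint 0).const_mul _).add ((hint 1).const_mul _))
      ((hint 2).const_mul _),
    intervalIntegral.integral_add ((hint 0).const_mul _) ((hint 1).const_mul _)]
  simp only [intervalIntegral.integral_const_mul, I]

theorem integral_planarDensity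
    (lam c t : ℝ) (hlam : 0 < lam) (hc : 0 < c) (ht : 0 < t) :
    ∫ u in (0 : ℝ)..(c * t), planarDensity lam c u t =
      1 - Real.exp (-(lam * t)) - lam * t * Real.exp (-(lam * t)) := by
  have hx : 2 * (lam / (2 * c)) * (c * t) = lam * t := by field_simp
  have h0 := two_mul_integral_besselSeries_zero (lam / (2 * c)) (c * t)
  have h1 := two_mul_integral_besselSeries_one (lam / (2 * c)) (c * t)
  have h2 := four_mul_pow_three_integral_besselSeries_two (lam / (2 * c)) (c * t)
  rw [hx] at h0 h1 h2
  rw [integral_planarDensity_eq_besselSeries]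
  beta_reduce
  rw [eq_div_of_mul_eq (by positivity) ((mul_comm _ _).trans h0),
    eq_div_of_mul_eq (by positivity) ((mul_comm _ _).trans h1),
    eq_div_of_mul_eq (by positivity) ((mul_comm _ _).trans h2), sinh_eq, cosh_eq, exp_neg]
  field_simp
  ring
end

section
/- Let λ > 0, c > 0, t > 0, 0 < u < ct, and define p(u,t) = (e^{−λt}/c) [ −λ F(u,t) + (∂F/∂t)(u,t) + (2/λ)(∂²F/∂t²)(u,t) ], where F(u,t) = ∑_{k=0}^∞ (λ/(2c))^{2k} (c²t² − u²)^k / (k!)². Then p(u,t) = (λ/c) · (e^{−λt}/(c²t² − u²)) · ∑_{k=0}^∞ (λ/(2c))^{2k} (c²t² − u²)^k / (k!)² · [ (c²t² + u²)(1 − 1/(k+1)) + λt(c²t² − u²)/(2(k+1)) ]. -/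
open scoped Nat

noncomputable def powerSum (a : ℕ → ℝ) (y : ℝ) : ℝ := ∑' n, a n * y ^ n

def derivCoeff (a : ℕ → ℝ) (n : ℕ) : ℝ := (n + 1) * a (n + 1)

section EntirePowerSeries

variable {a : ℕ → ℝ} {C : ℝ}

theorem summable_mul_pow_of_abs_le (ha : ∀ n, |a n| ≤ C / n !) (x : ℝ) :
    Summable fun n => a n * x ^ n := by
  refine .of_norm_bounded ((Real.summable_pow_div_factorial |x|).mul_left C) fun n => ?_
  calc ‖a n * x ^ n‖ = |a n| * |x| ^ n := by rw [Real.norm_eq_abs, abs_mul, abs_pow]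
    _ ≤ C / n ! * |x| ^ n := by gcongr; exact ha n
    _ = C * (|x| ^ n / n !) := by ring

theorem abs_derivCoeff_le (ha : ∀ n, |a n| ≤ C / n !) (n : ℕ) :
    |derivCoeff a n| ≤ C / n ! := by
  have hn : (0 : ℝ) < n + 1 := by positivity
  calc |derivCoeff a n| = (n + 1) * |a (n + 1)| := by
        rw [derivCoeff, abs_mul, abs_of_pos hn]
    _ ≤ (n + 1) * (C / (n + 1) !) := by gcongr; exact ha _
    _ = C / n ! := by
        rw [Nat.factorial_succ, Nat.cast_mul]; push_cast; field_simp

theorem hasDerivAt_powerSum (ha : ∀ n, |a n| ≤ C / n !) (x : ℝ) :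
    HasDerivAt (powerSum a) (powerSum (derivCoeff a) x) x := by
  have hshift : powerSum a = fun y => a 0 + ∑' n, a (n + 1) * y ^ (n + 1) := by
    funext y
    rw [powerSum, (summable_mul_pow_of_abs_le ha y).tsum_eq_zero_add, pow_zero, mul_one]
  set R := |x| + 1
  rw [hshift]
  refine .const_add _ <| hasDerivAt_tsum_of_isPreconnected (t := Metric.ball 0 R) (y₀ := 0)
    (g' := fun n y => derivCoeff a n * y ^ n) (u := fun n => C * (R ^ n / n !))
    ((Real.summable_pow_div_factorial R).mul_left C) Metric.isOpen_ball
    (convex_ball 0 R).isPreconnected (fun n y _ => ?_) (fun n y hy => ?_)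
    (Metric.mem_ball_self (by positivity)) (by simp) (by simp [R])
  · refine ((hasDerivAt_pow (n + 1) y).const_mul (a (n + 1))).congr_deriv ?_
    simp only [derivCoeff, Nat.add_sub_cancel]; push_cast; ring
  · have hyR : |y| ≤ R := by
      rw [Metric.mem_ball, dist_zero_right, Real.norm_eq_abs] at hy; exact hy.le
    calc ‖derivCoeff a n * y ^ n‖ = |derivCoeff a n| * |y| ^ n := by
          rw [Real.norm_eq_abs, abs_mul, abs_pow]
      _ ≤ C / n ! * R ^ n :=
          mul_le_mul (abs_derivCoeff_le ha n) (pow_le_pow_left₀ (abs_nonneg y) hyR n)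
            (by positivity) ((abs_nonneg _).trans (abs_derivCoeff_le ha n))
      _ = C * (R ^ n / n !) := by ring

theorem hasSum_mul_powerSum_derivCoeff (ha : ∀ n, |a n| ≤ C / n !) (x : ℝ) :
    HasSum (fun n => n * a n * x ^ n) (x * powerSum (derivCoeff a) x) := by
  rw [← hasSum_nat_add_iff' 1, Finset.sum_range_one, Nat.cast_zero, zero_mul, zero_mul, sub_zero,
    powerSum, ← tsum_mul_left]
  refine ((summable_mul_pow_of_abs_le (abs_derivCoeff_le ha) x).mul_left x).hasSum.congr_fun
    fun n => ?_
  simp only [derivCoeff, Nat.cast_succ]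
  ring

end EntirePowerSeries

-- `powerSum besselCoeff (x ^ 2 / 4) = I₀ x`
noncomputable def besselCoeff (n : ℕ) : ℝ := 1 / (n ! : ℝ) ^ 2

theorem abs_besselCoeff_le (n : ℕ) : |besselCoeff n| ≤ 1 / n ! := by
  have h1 : (1 : ℝ) ≤ n ! := by exact_mod_cast n.factorial_pos
  rw [besselCoeff, abs_of_nonneg (by positivity), sq]
  exact one_div_le_one_div_of_le (by positivity) (le_mul_of_one_le_left (by positivity) h1)

theorem succ_mul_derivCoeff_besselCoeff (n : ℕ) :
    (n + 1) * derivCoeff besselCoeff n = besselCoeff n := by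
  simp only [derivCoeff, besselCoeff, Nat.factorial_succ]
  push_cast
  field_simp

theorem powerSum_besselCoeff_ode (x : ℝ) :
    x * powerSum (derivCoeff (derivCoeff besselCoeff)) x + powerSum (derivCoeff besselCoeff) x =
      powerSum besselCoeff x := by
  have hd := abs_derivCoeff_le abs_besselCoeff_le
  refine (((hasSum_mul_powerSum_derivCoeff hd x).add
    (summable_mul_pow_of_abs_le hd x).hasSum).congr_fun fun n => ?_).tsum_eq.symm
  rw [← succ_mul_derivCoeff_besselCoeff]
  ring

theorem tsum_besselCoeff_mul_pow_mul (w A B : ℝ) :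
    ∑' n : ℕ, besselCoeff n * w ^ n * (A + B / (n + 1)) =
      A * powerSum besselCoeff w + B * powerSum (derivCoeff besselCoeff) w := by
  refine ((((summable_mul_pow_of_abs_le abs_besselCoeff_le w).hasSum.mul_left A).add
    ((summable_mul_pow_of_abs_le (abs_derivCoeff_le abs_besselCoeff_le) w).hasSum.mul_left
      B)).congr_fun fun n => ?_).tsum_eq
  rw [← succ_mul_derivCoeff_besselCoeff]
  field_simp

theorem hasDerivAt_mul_sq_sub_sq (q c u s : ℝ) :
    HasDerivAt (fun s => q * (c ^ 2 * s ^ 2 - u ^ 2)) (q * (2 * c ^ 2 * s)) s := by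
  refine ((((hasDerivAt_pow 2 s).const_mul (c ^ 2)).sub_const (u ^ 2)).const_mul q).congr_deriv ?_
  push_cast
  ring

section CyclicMotion

variable (lam c u : ℝ)

theorem F_eq_powerSum (s : ℝ) :
    F lam c u s = powerSum besselCoeff ((lam / (2 * c)) ^ 2 * (c ^ 2 * s ^ 2 - u ^ 2)) :=
  tsum_congr fun k => by rw [besselCoeff, pow_mul, mul_pow]; ring

theorem deriv_F (s : ℝ) :
    deriv (F lam c u) s =
      powerSum (derivCoeff besselCoeff) ((lam / (2 * c)) ^ 2 * (c ^ 2 * s ^ 2 - u ^ 2)) *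
        ((lam / (2 * c)) ^ 2 * (2 * c ^ 2 * s)) := by
  rw [show F lam c u = _ from funext (F_eq_powerSum lam c u)]
  exact ((hasDerivAt_powerSum abs_besselCoeff_le _).comp s (hasDerivAt_mul_sq_sub_sq _ c u s)).deriv

theorem iteratedDeriv_two_F (t : ℝ) :
    iteratedDeriv 2 (F lam c u) t =
      powerSum (derivCoeff (derivCoeff besselCoeff))
          ((lam / (2 * c)) ^ 2 * (c ^ 2 * t ^ 2 - u ^ 2)) *
          ((lam / (2 * c)) ^ 2 * (2 * c ^ 2 * t)) * ((lam / (2 * c)) ^ 2 * (2 * c ^ 2 * t)) +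
        powerSum (derivCoeff besselCoeff) ((lam / (2 * c)) ^ 2 * (c ^ 2 * t ^ 2 - u ^ 2)) *
          ((lam / (2 * c)) ^ 2 * (2 * c ^ 2)) := by
  rw [iteratedDeriv_succ, iteratedDeriv_one, funext (deriv_F lam c u)]
  have hlin : HasDerivAt (fun s => (lam / (2 * c)) ^ 2 * (2 * c ^ 2 * s))
      ((lam / (2 * c)) ^ 2 * (2 * c ^ 2)) t := by
    simpa using ((hasDerivAt_id t).const_mul (2 * c ^ 2)).const_mul ((lam / (2 * c)) ^ 2)
  exact (((hasDerivAt_powerSum (abs_derivCoeff_le abs_besselCoeff_le) _).comp t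
    (hasDerivAt_mul_sq_sub_sq _ c u t)).mul hlin).deriv

end CyclicMotion

theorem planarDensity_series_form_general
    (lam c t u : ℝ) (hlam : 0 < lam) (hc : 0 < c)
    (hu0 : 0 < u) (huct : u < c * t) :
    planarDensity lam c u t =
      lam / c * (Real.exp (-(lam * t)) / (c ^ 2 * t ^ 2 - u ^ 2)) *
        ∑' k : ℕ, (lam / (2 * c)) ^ (2 * k) * (c ^ 2 * t ^ 2 - u ^ 2) ^ k /
          ((Nat.factorial k : ℝ)) ^ 2 *
          ((c ^ 2 * t ^ 2 + u ^ 2) * (1 - 1 / ((k : ℝ) + 1)) +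
            lam * t * (c ^ 2 * t ^ 2 - u ^ 2) / (2 * ((k : ℝ) + 1))) := by
  have hz : 0 < c ^ 2 * t ^ 2 - u ^ 2 := by nlinarith
  have hseries : ∑' k : ℕ, (lam / (2 * c)) ^ (2 * k) * (c ^ 2 * t ^ 2 - u ^ 2) ^ k /
        ((Nat.factorial k : ℝ)) ^ 2 * ((c ^ 2 * t ^ 2 + u ^ 2) * (1 - 1 / ((k : ℝ) + 1)) +
          lam * t * (c ^ 2 * t ^ 2 - u ^ 2) / (2 * ((k : ℝ) + 1))) =
      ∑' k : ℕ, besselCoeff k * ((lam / (2 * c)) ^ 2 * (c ^ 2 * t ^ 2 - u ^ 2)) ^ k *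
        ((c ^ 2 * t ^ 2 + u ^ 2) +
          (lam * t * (c ^ 2 * t ^ 2 - u ^ 2) / 2 - (c ^ 2 * t ^ 2 + u ^ 2)) / (k + 1)) :=
    tsum_congr fun k => by rw [besselCoeff, pow_mul, mul_pow]; field_simp; ring
  have hode := powerSum_besselCoeff_ode ((lam / (2 * c)) ^ 2 * (c ^ 2 * t ^ 2 - u ^ 2))
  rw [planarDensity, deriv_F, iteratedDeriv_two_F, F_eq_powerSum, hseries,
    tsum_besselCoeff_mul_pow_mul]
  field_simp at hode ⊢
  linear_combination t ^ 2 * hode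

theorem planarDensity_series_form
    (lam c t u : ℝ) (hlam : 0 < lam) (hc : 0 < c) (ht : 0 < t)
    (hu0 : 0 < u) (huct : u < c * t) :
    planarDensity lam c u t =
      lam / c * (Real.exp (-(lam * t)) / (c ^ 2 * t ^ 2 - u ^ 2)) *
        ∑' k : ℕ, (lam / (2 * c)) ^ (2 * k) * (c ^ 2 * t ^ 2 - u ^ 2) ^ k /
          ((Nat.factorial k : ℝ)) ^ 2 *
          ((c ^ 2 * t ^ 2 + u ^ 2) * (1 - 1 / ((k : ℝ) + 1)) +
            lam * t * (c ^ 2 * t ^ 2 - u ^ 2) / (2 * ((k : ℝ) + 1))) :=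
  planarDensity_series_form_general lam c t u hlam hc hu0 huct
end
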